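/- arXiv:2603.20873 — 4 statements merged into one kernel-verified Lean document; each statement's English description precedes it below -/
import Mathlib

section
/- Let m ≥ 1, and let N, N* ∈ ℝ^m have positive entries. Suppose there exists ε ≥ 0 such that |N_i − N*_i| ≤ ε for all i ∈ {1,…,m}. Define p_i(N) = N_i / Σ_{j=1}^m N_j. Then for every i, |p_i(N) − p_i(N*)| ≤ (m−1) ε / Σ_{j=1}^m N*_j. -/
theorem stmt_2 (m : ℕ) (hm : 1 ≤ m) (N Nstar : Fin m → ℝ)
    (hN : ∀ i, 0 < N i) (hNstar : ∀ i, 0 < Nstar i)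
    (ε : ℝ) (hε : 0 ≤ ε) (hclose : ∀ i, |N i - Nstar i| ≤ ε) :
    ∀ i, |N i / (∑ j, N j) - Nstar i / (∑ j, Nstar j)| ≤
      ((m : ℝ) - 1) * ε / (∑ j, Nstar j) := by
  intro i
  set S := ∑ j, N j with hSdef
  set T := ∑ j, Nstar j with hTdef
  have hne : (Finset.univ : Finset (Fin m)).Nonempty := ⟨⟨0, by omega⟩, Finset.mem_univ _⟩
  have hS : 0 < S := Finset.sum_pos (fun j _ => hN j) hne
  have hT : 0 < T := Finset.sum_pos (fun j _ => hNstar j) hne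
  set A := ∑ j ∈ Finset.univ.erase i, N j with hA
  set B := ∑ j ∈ Finset.univ.erase i, Nstar j with hB
  have hSA : S = N i + A := (Finset.add_sum_erase _ _ (Finset.mem_univ i)).symm
  have hTB : T = Nstar i + B := (Finset.add_sum_erase _ _ (Finset.mem_univ i)).symm
  have hA0 : 0 ≤ A := Finset.sum_nonneg (fun j _ => (hN j).le)
  have hcard : (Finset.univ.erase i).card = m - 1 := by
    rw [Finset.card_erase_of_mem (Finset.mem_univ i)]; simp
  have hBA : |B - A| ≤ ((m : ℝ) - 1) * ε := by
    rw [hA, hB, ← Finset.sum_sub_distrib]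
    calc |∑ j ∈ Finset.univ.erase i, (Nstar j - N j)|
        ≤ ∑ j ∈ Finset.univ.erase i, |Nstar j - N j| :=
          Finset.abs_sum_le_sum_abs _ _
      _ ≤ ∑ _j ∈ Finset.univ.erase i, ε :=
          Finset.sum_le_sum (fun j _ => by rw [abs_sub_comm]; exact hclose j)
      _ = ((m : ℝ) - 1) * ε := by
          rw [Finset.sum_const, hcard, nsmul_eq_mul, Nat.cast_sub hm, Nat.cast_one]
  have key : N i / S - Nstar i / T = (N i * (B - A) + (N i - Nstar i) * A) / (S * T) := by
    rw [div_sub_div _ _ hS.ne' hT.ne']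
    congr 1
    rw [hSA, hTB]; ring
  rw [key, abs_div, abs_of_pos (mul_pos hS hT)]
  have hnum : |N i * (B - A) + (N i - Nstar i) * A| ≤ ((m : ℝ) - 1) * ε * S := by
    have h1 : |N i * (B - A) + (N i - Nstar i) * A|
        ≤ N i * |B - A| + |N i - Nstar i| * A := by
      calc |N i * (B - A) + (N i - Nstar i) * A|
          ≤ |N i * (B - A)| + |(N i - Nstar i) * A| := abs_add_le _ _
        _ = N i * |B - A| + |N i - Nstar i| * A := by
            rw [abs_mul, abs_mul, abs_of_pos (hN i), abs_of_nonneg hA0]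
    have h2 : N i * |B - A| + |N i - Nstar i| * A
        ≤ N i * (((m : ℝ) - 1) * ε) + ε * A :=
      add_le_add (mul_le_mul_of_nonneg_left hBA (hN i).le)
        (mul_le_mul_of_nonneg_right (hclose i) hA0)
    have h3 : N i * (((m : ℝ) - 1) * ε) + ε * A ≤ ((m : ℝ) - 1) * ε * S := by
      rcases eq_or_lt_of_le hm with h1' | h2'
      · have hAe : A = 0 := by
          have : Finset.univ.erase i = ∅ := Finset.card_eq_zero.mp (by omega)
          rw [hA, this, Finset.sum_empty]
        rw [hSA, hAe, ← h1']
        norm_num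
      · have hm2 : (1 : ℝ) ≤ (m : ℝ) - 1 := by
          have : (2 : ℕ) ≤ m := h2'
          have h : (2 : ℝ) ≤ (m : ℝ) := by exact_mod_cast this
          linarith
        rw [hSA]
        nlinarith [mul_nonneg hε hA0]
    linarith
  calc |N i * (B - A) + (N i - Nstar i) * A| / (S * T)
      ≤ (((m : ℝ) - 1) * ε * S) / (S * T) := by
        gcongr
    _ = ((m : ℝ) - 1) * ε / T := by
        field_simp
end

section
/- Let {a_k} and {θ_k} be nonnegative real sequences indexed by k ≥ T (with T a fixed starting index), let H ≥ 1 be an integer, β > 0, γ > 0, and suppose a_T = 0 and for all T+1 ≤ k ≤ T+H, a_k ≤ (k−T) γ² Σ_{t=T}^{k−1} (β a_t + θ_t). Then for all T+1 ≤ k ≤ T+H, a_k ≤ H γ² Σ_{t=T}^{k−1} (β H γ² + 1)^{k−t−1} θ_t. -/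
theorem stmt_4 (a θ : ℕ → ℝ) (ha : ∀ k, 0 ≤ a k) (hθ : ∀ k, 0 ≤ θ k)
    (T H : ℕ) (hH : 1 ≤ H) (β γ : ℝ) (hβ : 0 < β) (hγ : 0 < γ)
    (haT : a T = 0)
    (hrec : ∀ k, T + 1 ≤ k → k ≤ T + H →
      a k ≤ ((k - T : ℕ) : ℝ) * γ ^ 2 * ∑ t ∈ Finset.Ico T k, (β * a t + θ t)) :
    ∀ k, T + 1 ≤ k → k ≤ T + H →
      a k ≤ (H : ℝ) * γ ^ 2 *
        ∑ t ∈ Finset.Ico T k, (β * H * γ ^ 2 + 1) ^ (k - t - 1) * θ t := by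
  have hBnn : (0:ℝ) ≤ β * H * γ ^ 2 := by positivity
  set C : ℝ := β * H * γ ^ 2 + 1 with hCdef
  have hC0 : (0:ℝ) ≤ C := by linarith
  have hSnn : ∀ n, 0 ≤ ∑ t ∈ Finset.Ico T n, (β * a t + θ t) := by
    intro n
    apply Finset.sum_nonneg
    intro t _
    have := ha t; have := hθ t
    nlinarith [hβ.le]
  -- a n ≤ H γ² S n for all T+1 ≤ n ≤ T+H, and trivially (via 0) for n = T
  have haS : ∀ n, T ≤ n → n ≤ T + H →
      a n ≤ (H : ℝ) * γ ^ 2 * ∑ t ∈ Finset.Ico T n, (β * a t + θ t) := by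
    intro n h1 h2
    rcases eq_or_lt_of_le h1 with h | h
    · rw [← h, haT]
      exact mul_nonneg (by positivity) (hSnn T)
    · have hrecn := hrec n (by omega) h2
      have hcast : ((n - T : ℕ) : ℝ) ≤ (H : ℝ) := by
        have h' : n - T ≤ H := by omega
        exact_mod_cast h'
      calc a n ≤ ((n - T : ℕ) : ℝ) * γ ^ 2 * ∑ t ∈ Finset.Ico T n, (β * a t + θ t) := hrecn
        _ ≤ (H : ℝ) * γ ^ 2 * ∑ t ∈ Finset.Ico T n, (β * a t + θ t) := by
            apply mul_le_mul_of_nonneg_right _ (hSnn n)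
            apply mul_le_mul_of_nonneg_right hcast (by positivity)
  have key : ∀ n, n ≤ T + H →
      ∑ t ∈ Finset.Ico T n, (β * a t + θ t) ≤
        ∑ t ∈ Finset.Ico T n, C ^ (n - t - 1) * θ t := by
    intro n
    induction n with
    | zero => intro _; simp
    | succ n ih =>
      intro hn
      by_cases hTn : n < T
      · have he : Finset.Ico T (n+1) = ∅ := Finset.Ico_eq_empty (by omega)
        simp [he]
      push_neg at hTn
      have hnle : n ≤ T + H := by omega
      have ihn := ih hnle
      rw [Finset.sum_Ico_succ_top hTn, Finset.sum_Ico_succ_top hTn]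
      have han : β * a n ≤ β * H * γ ^ 2 * ∑ t ∈ Finset.Ico T n, C ^ (n - t - 1) * θ t := by
        have h1 := haS n hTn hnle
        have h2 : β * a n ≤ β * ((H : ℝ) * γ ^ 2 * ∑ t ∈ Finset.Ico T n, (β * a t + θ t)) :=
          mul_le_mul_of_nonneg_left h1 hβ.le
        have h3 : β * ((H : ℝ) * γ ^ 2 * ∑ t ∈ Finset.Ico T n, (β * a t + θ t)) ≤
            β * ((H : ℝ) * γ ^ 2 * ∑ t ∈ Finset.Ico T n, C ^ (n - t - 1) * θ t) := by
          apply mul_le_mul_of_nonneg_left _ hβ.le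
          exact mul_le_mul_of_nonneg_left ihn (by positivity)
        calc β * a n ≤ _ := h2
          _ ≤ _ := h3
          _ = β * H * γ ^ 2 * ∑ t ∈ Finset.Ico T n, C ^ (n - t - 1) * θ t := by ring
      have hshift : ∑ t ∈ Finset.Ico T n, C ^ (n + 1 - t - 1) * θ t =
          C * ∑ t ∈ Finset.Ico T n, C ^ (n - t - 1) * θ t := by
        rw [Finset.mul_sum]
        apply Finset.sum_congr rfl
        intro t ht
        rw [Finset.mem_Ico] at ht
        have he : n + 1 - t - 1 = (n - t - 1) + 1 := by omega
        rw [he, pow_succ]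
        ring
      have hlast : C ^ (n + 1 - n - 1) * θ n = θ n := by
        simp
      rw [hshift, hlast, hCdef]
      have hs : (0:ℝ) ≤ ∑ t ∈ Finset.Ico T n, C ^ (n - t - 1) * θ t :=
        Finset.sum_nonneg fun t _ => mul_nonneg (pow_nonneg hC0 _) (hθ t)
      have := hθ n
      nlinarith [han, ihn, hs]
  intro k hk1 hk2
  calc a k ≤ (H : ℝ) * γ ^ 2 * ∑ t ∈ Finset.Ico T k, (β * a t + θ t) :=
        haS k (by omega) hk2
    _ ≤ (H : ℝ) * γ ^ 2 * ∑ t ∈ Finset.Ico T k, C ^ (k - t - 1) * θ t :=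
        mul_le_mul_of_nonneg_left (key k hk2) (by positivity)
end

section
/- Let {a_k} and {θ_k} be nonnegative real sequences with a_T = 0, H ≥ 1 an integer, β > 0, and 0 < γ ≤ 1/(H√β). Suppose for all T+1 ≤ k ≤ T+H, a_k ≤ (k−T) γ² Σ_{t=T}^{k−1} (β a_t + θ_t). Then for all T+1 ≤ k ≤ T+H, a_k ≤ 3 H γ² Σ_{t=T}^{k−1} θ_t. -/
theorem stmt_5 (a θ : ℕ → ℝ) (ha : ∀ k, 0 ≤ a k) (hθ : ∀ k, 0 ≤ θ k)
    (T H : ℕ) (hH : 1 ≤ H) (β γ : ℝ) (hβ : 0 < β) (hγpos : 0 < γ)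
    (hγ : γ ≤ 1 / (H * Real.sqrt β)) (haT : a T = 0)
    (hrec : ∀ k, T + 1 ≤ k → k ≤ T + H →
      a k ≤ ((k - T : ℕ) : ℝ) * γ ^ 2 * ∑ t ∈ Finset.Ico T k, (β * a t + θ t)) :
    ∀ k, T + 1 ≤ k → k ≤ T + H →
      a k ≤ 3 * (H : ℝ) * γ ^ 2 * ∑ t ∈ Finset.Ico T k, θ t := by
  have hHpos : (0:ℝ) < H := by exact_mod_cast hH
  have hS : ∀ k, 0 ≤ ∑ t ∈ Finset.Ico T k, θ t :=
    fun k => Finset.sum_nonneg fun t _ => hθ t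
  set b : ℝ := β * H * γ ^ 2 with hb
  have hbpos : 0 < b := by positivity
  -- b ≤ 1/H
  have hsb : 0 < Real.sqrt β := Real.sqrt_pos.2 hβ
  have hγ2 : γ ^ 2 ≤ 1 / ((H:ℝ)^2 * β) := by
    have h1 : γ ^ 2 ≤ (1 / (H * Real.sqrt β)) ^ 2 := by
      apply pow_le_pow_left₀ hγpos.le hγ
    calc γ ^ 2 ≤ (1 / (H * Real.sqrt β)) ^ 2 := h1
      _ = 1 / ((H:ℝ)^2 * β) := by
          rw [div_pow, one_pow, mul_pow, Real.sq_sqrt hβ.le]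
  have hbH : b ≤ 1 / H := by
    have : b ≤ β * H * (1 / ((H:ℝ)^2 * β)) := by
      apply mul_le_mul_of_nonneg_left hγ2 (by positivity)
    calc b ≤ β * H * (1 / ((H:ℝ)^2 * β)) := this
      _ = 1 / H := by field_simp
  -- key Grönwall bound
  have key : ∀ k, T + 1 ≤ k → k ≤ T + H →
      a k ≤ (H:ℝ) * γ ^ 2 * (1 + b) ^ (k - T - 1) * ∑ t ∈ Finset.Ico T k, θ t := by
    intro k
    induction k using Nat.strong_induction_on with
    | _ k ih =>
      intro hk1 hk2
      have hTk : T < k := hk1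
      have h1 := hrec k hk1 hk2
      set S : ℝ := ∑ t ∈ Finset.Ico T k, θ t with hSdef
      -- bound the sum
      have hsum : ∑ t ∈ Finset.Ico T k, (β * a t + θ t) ≤ (1 + b) ^ (k - T - 1) * S := by
        have hsplit : ∑ t ∈ Finset.Ico T k, (β * a t + θ t)
            = β * (∑ t ∈ Finset.Ico T k, a t) + S := by
          rw [Finset.sum_add_distrib, Finset.mul_sum]
        rw [hsplit]
        have hbot : ∑ t ∈ Finset.Ico T k, a t = ∑ t ∈ Finset.Ico (T+1) k, a t := by
          rw [Finset.sum_eq_sum_Ico_succ_bot hTk, haT, zero_add]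
        have hterm : ∀ t ∈ Finset.Ico (T+1) k,
            a t ≤ (H:ℝ) * γ ^ 2 * (1 + b) ^ (t - T - 1) * S := by
          intro t ht
          obtain ⟨ht1, ht2⟩ := Finset.mem_Ico.1 ht
          have hSt : (∑ s ∈ Finset.Ico T t, θ s) ≤ S := by
            apply Finset.sum_le_sum_of_subset_of_nonneg
            · exact Finset.Ico_subset_Ico_right ht2.le
            · exact fun s _ _ => hθ s
          have := ih t ht2 ht1 (le_trans (Nat.le_of_lt ht2) hk2)
          calc a t ≤ (H:ℝ) * γ ^ 2 * (1 + b) ^ (t - T - 1) * ∑ s ∈ Finset.Ico T t, θ s := this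
            _ ≤ (H:ℝ) * γ ^ 2 * (1 + b) ^ (t - T - 1) * S := by
                apply mul_le_mul_of_nonneg_left hSt (by positivity)
        have hsum2 : ∑ t ∈ Finset.Ico (T+1) k, a t
            ≤ ∑ t ∈ Finset.Ico (T+1) k, (H:ℝ) * γ ^ 2 * (1 + b) ^ (t - T - 1) * S :=
          Finset.sum_le_sum hterm
        have hgeom : ∑ t ∈ Finset.Ico (T+1) k, (H:ℝ) * γ ^ 2 * (1 + b) ^ (t - T - 1) * S
            = (H:ℝ) * γ ^ 2 * S * ∑ j ∈ Finset.range (k - (T+1)), (1 + b) ^ j := by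
          rw [Finset.sum_Ico_eq_sum_range, Finset.mul_sum]
          apply Finset.sum_congr rfl
          intro j _
          have : T + 1 + j - T - 1 = j := by omega
          rw [this]; ring
        have hgs : ∑ j ∈ Finset.range (k - (T+1)), (1 + b) ^ j
            = ((1 + b) ^ (k - T - 1) - 1) / b := by
          rw [geom_sum_eq (by linarith : (1:ℝ) + b ≠ 1)]
          have : k - (T + 1) = k - T - 1 := by omega
          rw [this]; ring_nf
        have hfin : β * (∑ t ∈ Finset.Ico T k, a t)
            ≤ ((1 + b) ^ (k - T - 1) - 1) * S := by
          rw [hbot]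
          calc β * (∑ t ∈ Finset.Ico (T+1) k, a t)
              ≤ β * ((H:ℝ) * γ ^ 2 * S * (((1 + b) ^ (k - T - 1) - 1) / b)) := by
                apply mul_le_mul_of_nonneg_left _ hβ.le
                rw [← hgs, ← hgeom]; exact hsum2
            _ = ((1 + b) ^ (k - T - 1) - 1) * S := by
                rw [hb]; field_simp
        nlinarith [hS k]
      have hkT : ((k - T : ℕ) : ℝ) ≤ (H:ℝ) := by
        have : k - T ≤ H := by omega
        exact_mod_cast this
      have hsnn : 0 ≤ ∑ t ∈ Finset.Ico T k, (β * a t + θ t) :=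
        Finset.sum_nonneg fun t _ => by nlinarith [ha t, hθ t]
      calc a k ≤ ((k - T : ℕ) : ℝ) * γ ^ 2 * ∑ t ∈ Finset.Ico T k, (β * a t + θ t) := h1
        _ ≤ (H:ℝ) * γ ^ 2 * ∑ t ∈ Finset.Ico T k, (β * a t + θ t) := by
            apply mul_le_mul_of_nonneg_right _ hsnn
            apply mul_le_mul_of_nonneg_right hkT (by positivity)
        _ ≤ (H:ℝ) * γ ^ 2 * ((1 + b) ^ (k - T - 1) * S) := by
            apply mul_le_mul_of_nonneg_left hsum (by positivity)
        _ = (H:ℝ) * γ ^ 2 * (1 + b) ^ (k - T - 1) * S := by ring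
  -- conclude
  intro k hk1 hk2
  have hkey := key k hk1 hk2
  have hpow : (1 + b) ^ (k - T - 1) ≤ 3 := by
    have h1 : (1 + b) ^ (k - T - 1) ≤ Real.exp b ^ (k - T - 1) := by
      apply pow_le_pow_left₀ (by linarith)
      linarith [Real.add_one_le_exp b]
    have h2 : Real.exp b ^ (k - T - 1) = Real.exp (b * ((k - T - 1 : ℕ) : ℝ)) := by
      rw [← Real.exp_nat_mul, mul_comm]
    have h3 : b * ((k - T - 1 : ℕ) : ℝ) ≤ 1 := by
      have hn : ((k - T - 1 : ℕ) : ℝ) ≤ (H:ℝ) := by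
        have : k - T - 1 ≤ H := by omega
        exact_mod_cast this
      have : b * ((k - T - 1 : ℕ) : ℝ) ≤ (1/H) * H := by
        apply mul_le_mul hbH hn (by positivity) (by positivity)
      calc b * ((k - T - 1 : ℕ) : ℝ) ≤ (1/H) * H := this
        _ = 1 := by field_simp
    calc (1 + b) ^ (k - T - 1) ≤ Real.exp (b * ((k - T - 1 : ℕ) : ℝ)) := by rw [← h2]; exact h1
      _ ≤ Real.exp 1 := Real.exp_le_exp.2 h3
      _ ≤ 3 := by linarith [Real.exp_one_lt_d9]
  calc a k ≤ (H:ℝ) * γ ^ 2 * (1 + b) ^ (k - T - 1) * ∑ t ∈ Finset.Ico T k, θ t := hkey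
    _ ≤ (H:ℝ) * γ ^ 2 * 3 * ∑ t ∈ Finset.Ico T k, θ t := by
        apply mul_le_mul_of_nonneg_right _ (hS k)
        apply mul_le_mul_of_nonneg_left hpow (by positivity)
    _ = 3 * (H:ℝ) * γ ^ 2 * ∑ t ∈ Finset.Ico T k, θ t := by ring
end

section
/- Let 0 < ρ < 1, δ₀ > 0, m ≥ 1, H ≥ 1 an integer, γ > 0. Define δ_{r(j)} = δ₀ ρ^{r(j)} with r(j) = ⌊j/H⌋, and for k ≥ 1 let c_k = 1 / ∏_{j=0}^{k−1} (1 + mγ√(δ_{r(j)})). Then for all k ≥ 0, c_k ≥ 1 − γ m H √δ₀ / (1 − √ρ). -/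
theorem stmt_17 (ρ δ₀ γ : ℝ) (hρ0 : 0 < ρ) (hρ1 : ρ < 1) (hδ₀ : 0 < δ₀)
    (hγ : 0 < γ) (m H : ℕ) (hm : 1 ≤ m) (hH : 1 ≤ H) :
    ∀ k : ℕ,
      (1 : ℝ) / ∏ j ∈ Finset.range k,
          (1 + m * γ * Real.sqrt (δ₀ * ρ ^ (j / H))) ≥
        1 - γ * m * H * Real.sqrt δ₀ / (1 - Real.sqrt ρ) := by
  intro k
  set s := Real.sqrt ρ with hs
  have hs0 : 0 ≤ s := Real.sqrt_nonneg ρ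
  have hs1 : s < 1 := by
    rw [hs, show (1:ℝ) = Real.sqrt 1 by simp]
    exact Real.sqrt_lt_sqrt hρ0.le hρ1
  have h1s : 0 < 1 - s := by linarith
  have hsd : 0 ≤ Real.sqrt δ₀ := Real.sqrt_nonneg δ₀
  have hterm : ∀ j : ℕ, Real.sqrt (δ₀ * ρ ^ (j / H)) = Real.sqrt δ₀ * s ^ (j / H) := by
    intro j
    rw [Real.sqrt_mul hδ₀.le, hs]
    congr 1
    induction (j / H) with
    | zero => simp
    | succ n ih => rw [pow_succ, pow_succ, Real.sqrt_mul (pow_nonneg hρ0.le n), ih]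
  -- sum over blocks
  have key : ∀ K : ℕ, ∑ j ∈ Finset.range (H * K), s ^ (j / H)
      = (H : ℝ) * ∑ r ∈ Finset.range K, s ^ r := by
    intro K
    induction K with
    | zero => simp
    | succ K ih =>
      rw [Nat.mul_succ, Finset.sum_range_add, ih, Finset.sum_range_succ]
      have hcongr : ∀ i ∈ Finset.range H, s ^ ((H * K + i) / H) = s ^ K := by
        intro i hi
        simp only [Finset.mem_range] at hi
        rw [Nat.mul_add_div (by omega), Nat.div_eq_of_lt hi, Nat.add_zero]
      rw [Finset.sum_congr rfl hcongr, Finset.sum_const, Finset.card_range]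
      push_cast
      ring
  have hgeom : ∑ r ∈ Finset.range k, s ^ r ≤ 1 / (1 - s) := by
    rw [geom_sum_eq (by linarith : s ≠ 1)]
    rw [show (s ^ k - 1) / (s - 1) = (1 - s ^ k) / (1 - s) by
      rw [div_eq_div_iff (by linarith) h1s.ne']; ring]
    gcongr
    · nlinarith [pow_nonneg hs0 k]
  have hsum : ∑ j ∈ Finset.range k, s ^ (j / H) ≤ (H : ℝ) / (1 - s) := by
    have h1 : ∑ j ∈ Finset.range k, s ^ (j / H)
        ≤ ∑ j ∈ Finset.range (H * k), s ^ (j / H) := by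
      apply Finset.sum_le_sum_of_subset_of_nonneg
      · exact Finset.range_subset_range.2 (Nat.le_mul_of_pos_left k (by omega))
      · intro i _ _; exact pow_nonneg hs0 _
    rw [key k] at h1
    calc ∑ j ∈ Finset.range k, s ^ (j / H) ≤ (H : ℝ) * ∑ r ∈ Finset.range k, s ^ r := h1
      _ ≤ (H : ℝ) * (1 / (1 - s)) := by
          apply mul_le_mul_of_nonneg_left hgeom (by positivity)
      _ = (H : ℝ) / (1 - s) := by ring
  set S := γ * m * H * Real.sqrt δ₀ / (1 - s) with hS
  set a : ℕ → ℝ := fun j => (m : ℝ) * γ * (Real.sqrt δ₀ * s ^ (j / H)) with ha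
  have ha0 : ∀ j, 0 ≤ a j := by
    intro j
    apply mul_nonneg (by positivity) (mul_nonneg hsd (pow_nonneg hs0 _))
  have hSumS : ∑ j ∈ Finset.range k, a j ≤ S := by
    rw [hS]
    have : ∑ j ∈ Finset.range k, a j
        = (m : ℝ) * γ * Real.sqrt δ₀ * ∑ j ∈ Finset.range k, s ^ (j / H) := by
      rw [Finset.mul_sum]; apply Finset.sum_congr rfl; intro j _; ring
    rw [this]
    rw [div_eq_mul_one_div]
    calc (m : ℝ) * γ * Real.sqrt δ₀ * ∑ j ∈ Finset.range k, s ^ (j / H)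
        ≤ (m : ℝ) * γ * Real.sqrt δ₀ * ((H : ℝ) / (1 - s)) := by
          apply mul_le_mul_of_nonneg_left hsum (by positivity)
      _ = γ * m * H * Real.sqrt δ₀ * (1 / (1 - s)) := by ring
  have hprod_eq : ∏ j ∈ Finset.range k, (1 + m * γ * Real.sqrt (δ₀ * ρ ^ (j / H)))
      = ∏ j ∈ Finset.range k, (1 + a j) := by
    apply Finset.prod_congr rfl; intro j _; rw [hterm j]
  rw [hprod_eq]
  have hP1 : ∀ j ∈ Finset.range k, (1 : ℝ) ≤ 1 + a j := by
    intro j _; linarith [ha0 j]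
  have hPpos : 0 < ∏ j ∈ Finset.range k, (1 + a j) :=
    Finset.prod_pos (fun j hj => by linarith [ha0 j])
  have hPle : ∏ j ∈ Finset.range k, (1 + a j) ≤ Real.exp (∑ j ∈ Finset.range k, a j) := by
    rw [Real.exp_sum]
    apply Finset.prod_le_prod
    · intro j hj; linarith [ha0 j]
    · intro j _; linarith [Real.add_one_le_exp (a j)]
  have h2 : Real.exp (-S) ≤ 1 / ∏ j ∈ Finset.range k, (1 + a j) := by
    rw [Real.exp_neg]
    rw [one_div, inv_le_inv₀ (Real.exp_pos S) hPpos] at *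
    calc ∏ j ∈ Finset.range k, (1 + a j) ≤ Real.exp (∑ j ∈ Finset.range k, a j) := hPle
      _ ≤ Real.exp S := Real.exp_le_exp.2 hSumS
  have h3 : 1 - S ≤ Real.exp (-S) := by linarith [Real.add_one_le_exp (-S)]
  exact le_trans h3 h2
end
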